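/- (Theorem 2(b), primal infeasibility) Let K ≥ 1, let x̃_1, …, x̃_K ∈ X with ergodic average x̄_K = (1/K)·Σ_{k=1}^{K} x̃_k, let λ_0, …, λ_{K+1} ∈ ℝᵖ, let L > 0, E ≥ 0, and let D ⊆ ℝᵖ. Define φ^k(λ) = (L/2)‖λ_k − λ‖² + (1/2)‖λ_{k−1} − λ*‖². Assume: (i) x* ∈ X satisfies Ax* = b and (x*, λ*) is a saddle point of the Lagrangian L(x;λ) = f(x) + ⟨Ax − b, λ⟩, i.e. L(x*;λ) ≤ L(x*;λ*) ≤ L(x;λ*) for all x ∈ X, λ ∈ ℝᵖ; (ii) r(x̄_K) ≠ 0 and λ* + r(x̄_K)/‖r(x̄_K)‖ ∈ D; (iii) for every k ∈ {1,…,K} and every λ ∈ D: f(x̃_k) − f(x*) + ⟨λ, r(x̃_k)⟩ ≤ φ^k(λ) − φ^{k+1}(λ) + E. Then ‖r(x̄_K)‖ ≤ (1/K)·φ^1(λ* + r(x̄_K)/‖r(x̄_K)‖) + E. -/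

import Mathlib

/-!
For the dual point `l = λ* + r̄ / ‖r̄‖`, the map `x ↦ f x - f x* + ⟪l, A x - b⟫` is convex, so by
Jensen its value at the ergodic average `x̄` is at most the mean of its values at the iterates;
summing the per-iteration inequalities telescopes, and dropping `φ^{K+1} ≥ 0` leaves
`φ^1(l) / K + E`. On the other side, `⟪l, r̄⟫ = ⟪λ*, r̄⟫ + ‖r̄‖`, and the saddle-point inequality at
`x̄ ∈ X` gives `f x̄ - f x* + ⟪λ*, r̄⟫ ≥ 0`, so the same value is at least `‖r̄‖`.
-/

open RealInnerProductSpace Finset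

section Average

variable {ι E : Type*} [AddCommGroup E] [Module ℝ E] {s : Set E} {t : Finset ι} {x : ι → E}

lemma Finset.sum_inv_card_eq_one (ht : t.Nonempty) : ∑ _i ∈ t, (#t : ℝ)⁻¹ = 1 := by
  rw [sum_const, nsmul_eq_mul, mul_inv_cancel₀ (by exact_mod_cast ht.card_ne_zero)]

theorem Convex.inv_card_smul_sum_mem (hs : Convex ℝ s) (ht : t.Nonempty)
    (hx : ∀ i ∈ t, x i ∈ s) : (#t : ℝ)⁻¹ • ∑ i ∈ t, x i ∈ s := by
  rw [smul_sum]
  exact hs.sum_mem (fun _ _ ↦ by positivity) (sum_inv_card_eq_one ht) hx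

theorem ConvexOn.map_inv_card_smul_sum_le {g : E → ℝ} (hg : ConvexOn ℝ s g) (ht : t.Nonempty)
    (hx : ∀ i ∈ t, x i ∈ s) :
    g ((#t : ℝ)⁻¹ • ∑ i ∈ t, x i) ≤ (#t : ℝ)⁻¹ * ∑ i ∈ t, g (x i) := by
  rw [smul_sum, mul_sum]
  exact hg.map_sum_le (fun _ _ ↦ by positivity) (sum_inv_card_eq_one ht) hx

end Average

theorem ConvexOn.map_avg_le_of_le_sub_succ {E : Type*} [AddCommGroup E] [Module ℝ E] {s : Set E}
    {g : E → ℝ} (hg : ConvexOn ℝ s g) {K : ℕ} (hK : 1 ≤ K) {x : ℕ → E}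
    (hx : ∀ k ∈ Icc 1 K, x k ∈ s) {φ : ℕ → ℝ} {c : ℝ}
    (hstep : ∀ k ∈ Icc 1 K, g (x k) ≤ φ k - φ (k + 1) + c) (hφ : 0 ≤ φ (K + 1)) :
    g ((K : ℝ)⁻¹ • ∑ k ∈ Icc 1 K, x k) ≤ 1 / K * φ 1 + c := by
  have hcard : #(Icc 1 K) = K := by simp
  have htelescope : ∑ k ∈ Icc 1 K, (φ k - φ (k + 1)) = φ 1 - φ (K + 1) := by
    simpa only [neg_sub_neg, sum_sub_distrib] using sum_Icc_sub hK fun k ↦ -φ k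
  have hKpos : (0 : ℝ) < K := by exact_mod_cast hK
  calc g ((K : ℝ)⁻¹ • ∑ k ∈ Icc 1 K, x k)
      ≤ (K : ℝ)⁻¹ * ∑ k ∈ Icc 1 K, g (x k) := by
        simpa only [hcard] using hg.map_inv_card_smul_sum_le (nonempty_Icc.2 hK) hx
    _ ≤ (K : ℝ)⁻¹ * ∑ k ∈ Icc 1 K, (φ k - φ (k + 1) + c) := by
        gcongr with k hk
        exact hstep k hk
    _ = (K : ℝ)⁻¹ * (φ 1 - φ (K + 1)) + c := by
        rw [sum_add_distrib, htelescope, sum_const, hcard, nsmul_eq_mul]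
        field_simp
    _ ≤ 1 / K * φ 1 + c := by
        rw [one_div]
        gcongr
        linarith

section InnerProduct

variable {E F : Type*} [AddCommGroup E] [Module ℝ E] [NormedAddCommGroup F]
  [InnerProductSpace ℝ F]

theorem convexOn_inner_apply_sub {s : Set E} (hs : Convex ℝ s) (l : F) (A : E →ₗ[ℝ] F) (b : F) :
    ConvexOn ℝ s fun x ↦ ⟪l, A x - b⟫ := by
  refine ((((innerₛₗ ℝ l).comp A).convexOn hs).add_const (-⟪l, b⟫)).congr fun x _ ↦ ?_
  simp [inner_sub_right, ← sub_eq_add_neg]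

theorem inner_add_inv_norm_smul_self (l r : F) : ⟪l + ‖r‖⁻¹ • r, r⟫ = ⟪l, r⟫ + ‖r‖ := by
  rcases eq_or_ne r 0 with rfl | hr
  · simp
  rw [inner_add_left, real_inner_smul_left, real_inner_self_eq_norm_sq]
  field_simp

end InnerProduct

theorem primal_infeasibility_general
    (n p : ℕ)
    (A : EuclideanSpace ℝ (Fin n) →ₗ[ℝ] EuclideanSpace ℝ (Fin p))
    (b : EuclideanSpace ℝ (Fin p))
    (f : EuclideanSpace ℝ (Fin n) → ℝ)
    (hf : ConvexOn ℝ Set.univ f)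
    (X : Set (EuclideanSpace ℝ (Fin n)))
    (hXconvex : Convex ℝ X)
    (K : ℕ) (hK : 1 ≤ K)
    (xt : ℕ → EuclideanSpace ℝ (Fin n))
    (hxt : ∀ k, 1 ≤ k → k ≤ K → xt k ∈ X)
    (xbar : EuclideanSpace ℝ (Fin n))
    (hxbar : xbar = (K : ℝ)⁻¹ • ∑ k ∈ Finset.Icc 1 K, xt k)
    (lam : ℕ → EuclideanSpace ℝ (Fin p))
    (lamstar : EuclideanSpace ℝ (Fin p))
    (L Econst : ℝ) (hL : 0 < L)
    (D : Set (EuclideanSpace ℝ (Fin p)))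
    (φ : ℕ → EuclideanSpace ℝ (Fin p) → ℝ)
    (hφ : ∀ k l,
      φ k l = L / 2 * ‖lam k - l‖ ^ 2 + 1 / 2 * ‖lam (k - 1) - lamstar‖ ^ 2)
    -- (i) primal feasible optimum and saddle point of the Lagrangian
    (xstar : EuclideanSpace ℝ (Fin n))
    (hxstar_feas : A xstar = b)
    (hsaddle_right : ∀ x ∈ X,
      f xstar + ⟪A xstar - b, lamstar⟫ ≤ f x + ⟪A x - b, lamstar⟫)
    -- (ii) nonzero residual and membership in `D`
    (hmemD : lamstar + ‖A xbar - b‖⁻¹ • (A xbar - b) ∈ D)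
    -- (iii) per-iteration inequality
    (hstep : ∀ k, 1 ≤ k → k ≤ K → ∀ l ∈ D,
      f (xt k) - f xstar + ⟪l, A (xt k) - b⟫ ≤ φ k l - φ (k + 1) l + Econst) :
    ‖A xbar - b‖ ≤
      1 / K * φ 1 (lamstar + ‖A xbar - b‖⁻¹ • (A xbar - b)) + Econst := by
  set l := lamstar + ‖A xbar - b‖⁻¹ • (A xbar - b)
  have hxt' : ∀ k ∈ Icc 1 K, xt k ∈ X := fun k hk ↦ hxt k (mem_Icc.1 hk).1 (mem_Icc.1 hk).2
  have hxbarX : xbar ∈ X := by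
    simpa [← hxbar] using hXconvex.inv_card_smul_sum_mem (nonempty_Icc.2 hK) hxt'
  have hgap : ConvexOn ℝ X fun x ↦ f x - f xstar + ⟪l, A x - b⟫ :=
    ((hf.subset (Set.subset_univ X) hXconvex).sub (concaveOn_const (f xstar) hXconvex)).add
      (convexOn_inner_apply_sub hXconvex l A b)
  have hbound := hgap.map_avg_le_of_le_sub_succ hK hxt'
    (fun k hk ↦ hstep k (mem_Icc.1 hk).1 (mem_Icc.1 hk).2 l hmemD) (by rw [hφ]; positivity)
  have hsaddle : f xstar ≤ f xbar + ⟪lamstar, A xbar - b⟫ := by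
    simpa [hxstar_feas, real_inner_comm] using hsaddle_right xbar hxbarX
  rw [← hxbar, inner_add_inv_norm_smul_self] at hbound
  linarith

/-- Theorem 2(b): primal infeasibility bound. -/
theorem primal_infeasibility
    (n p : ℕ)
    (A : EuclideanSpace ℝ (Fin n) →ₗ[ℝ] EuclideanSpace ℝ (Fin p))
    (b : EuclideanSpace ℝ (Fin p))
    (f : EuclideanSpace ℝ (Fin n) → ℝ)
    (hf : ConvexOn ℝ Set.univ f)
    (X : Set (EuclideanSpace ℝ (Fin n)))
    (hXne : X.Nonempty) (hXconvex : Convex ℝ X)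
    (K : ℕ) (hK : 1 ≤ K)
    (xt : ℕ → EuclideanSpace ℝ (Fin n))
    (hxt : ∀ k, 1 ≤ k → k ≤ K → xt k ∈ X)
    (xbar : EuclideanSpace ℝ (Fin n))
    (hxbar : xbar = (K : ℝ)⁻¹ • ∑ k ∈ Finset.Icc 1 K, xt k)
    (lam : ℕ → EuclideanSpace ℝ (Fin p))
    (lamstar : EuclideanSpace ℝ (Fin p))
    (L Econst : ℝ) (hL : 0 < L) (hE : 0 ≤ Econst)
    (D : Set (EuclideanSpace ℝ (Fin p)))
    (φ : ℕ → EuclideanSpace ℝ (Fin p) → ℝ)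
    (hφ : ∀ k l,
      φ k l = L / 2 * ‖lam k - l‖ ^ 2 + 1 / 2 * ‖lam (k - 1) - lamstar‖ ^ 2)
    -- (i) primal feasible optimum and saddle point of the Lagrangian
    (xstar : EuclideanSpace ℝ (Fin n)) (hxstarX : xstar ∈ X)
    (hxstar_feas : A xstar = b)
    (hsaddle_left : ∀ l : EuclideanSpace ℝ (Fin p),
      f xstar + ⟪A xstar - b, l⟫ ≤ f xstar + ⟪A xstar - b, lamstar⟫)
    (hsaddle_right : ∀ x ∈ X,
      f xstar + ⟪A xstar - b, lamstar⟫ ≤ f x + ⟪A x - b, lamstar⟫)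
    -- (ii) nonzero residual and membership in `D`
    (hres_ne : A xbar - b ≠ 0)
    (hmemD : lamstar + ‖A xbar - b‖⁻¹ • (A xbar - b) ∈ D)
    -- (iii) per-iteration inequality
    (hstep : ∀ k, 1 ≤ k → k ≤ K → ∀ l ∈ D,
      f (xt k) - f xstar + ⟪l, A (xt k) - b⟫ ≤ φ k l - φ (k + 1) l + Econst) :
    ‖A xbar - b‖ ≤
      1 / K * φ 1 (lamstar + ‖A xbar - b‖⁻¹ • (A xbar - b)) + Econst :=
  primal_infeasibility_general n p A b f hf X hXconvex K hK xt hxt xbar hxbar lam lamstar L Econst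
    hL D φ hφ xstar hxstar_feas hsaddle_right hmemD hstep
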